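/- Positivity of the Kummer function: for all real a, b with 0 < a < b and all real z (including negative z), M(a, b, z) > 0. -/

import Mathlib

open scoped BigOperators

/-- Pochhammer symbol `(a)ₙ = a(a+1)⋯(a+n−1)`, `(a)₀ = 1`. -/
noncomputable def poch (a : ℝ) (n : ℕ) : ℝ := ∏ k ∈ Finset.range n, (a + k)

/-- Kummer's confluent hypergeometric function `M(a,b,z)`. -/
noncomputable def kummerM (a b z : ℝ) : ℝ :=
  ∑' k : ℕ, poch a k / poch b k * z ^ k / (Nat.factorial k : ℝ)

/-- Steady-state probability `P_{0,n}` of the binary gene model. -/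
noncomputable def P0 (a b ν θ : ℝ) (n : ℕ) : ℝ :=
  (b - a) / (kummerM a b (ν * (1 - θ)) * b) * (ν ^ n / (Nat.factorial n : ℝ)) *
    (poch a n / poch (1 + b) n) * kummerM (a + n) (1 + b + n) (-(ν * θ))

/-- Steady-state probability `P_{1,n}` of the binary gene model. -/
noncomputable def P1 (a b ν θ : ℝ) (n : ℕ) : ℝ :=
  a / (kummerM a b (ν * (1 - θ)) * b) * (ν ^ n / (Nat.factorial n : ℝ)) *
    (poch (1 + a) n / poch (1 + b) n) * kummerM (1 + a + n) (1 + b + n) (-(ν * θ))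


lemma poch_pos {b : ℝ} (hb : 0 < b) (n : ℕ) : 0 < poch b n :=
  Finset.prod_pos fun k _ => by positivity

lemma poch_succ (c : ℝ) (j : ℕ) : poch c (j + 1) = poch c j * (c + j) :=
  Finset.prod_range_succ _ _

lemma poch_succ' (c : ℝ) (j : ℕ) : poch c (j + 1) = c * poch (c + 1) j := by
  unfold poch
  rw [Finset.prod_range_succ']
  rw [mul_comm]
  congr 1
  · push_cast; ring
  refine Finset.prod_congr rfl fun k _ => by push_cast; ring

lemma poch_add (b : ℝ) (m n : ℕ) : poch b (m + n) = poch b m * poch (b + m) n := by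
  unfold poch
  rw [Finset.prod_range_add]
  congr 1
  refine Finset.prod_congr rfl fun k _ => by push_cast; ring

lemma vandermonde (k : ℕ) : ∀ b c : ℝ,
    ∑ j ∈ Finset.range (k + 1),
      (-1 : ℝ) ^ j * (k.choose j : ℝ) * poch c j * poch (b + j) (k - j) = poch (b - c) k := by
  induction k with
  | zero => intro b c; simp [poch]
  | succ k ih =>
    intro b c
    have key : ∀ j ∈ Finset.range (k + 2),
        (-1 : ℝ) ^ j * ((k+1).choose j : ℝ) * poch c j * poch (b + j) (k + 1 - j)
          = (-1 : ℝ) ^ j * (k.choose j : ℝ) * poch c j * poch (b + j) (k + 1 - j)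
          + (if j = 0 then 0 else
            (-1 : ℝ) ^ j * (k.choose (j-1) : ℝ) * poch c j * poch (b + j) (k + 1 - j)) := by
      intro j _
      rcases Nat.eq_zero_or_pos j with rfl | hj0
      · simp
      · obtain ⟨i, rfl⟩ := Nat.exists_eq_succ_of_ne_zero hj0.ne'
        rw [if_neg (Nat.succ_ne_zero i), Nat.succ_sub_one, Nat.choose_succ_succ']
        push_cast; ring
    rw [Finset.sum_congr rfl key, Finset.sum_add_distrib]
    rw [Finset.sum_range_succ _ (k+1), Nat.choose_succ_self]
    rw [Finset.sum_range_succ' _ (k+1)]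
    simp only [Nat.succ_ne_zero, if_false, if_pos rfl, Nat.cast_zero, add_zero,
      mul_zero, zero_mul]
    rw [if_pos trivial, add_zero]
    rw [← Finset.sum_add_distrib]
    have step : ∀ j ∈ Finset.range (k + 1),
        (-1 : ℝ) ^ j * (k.choose j : ℝ) * poch c j * poch (b + j) (k + 1 - j)
          + (-1 : ℝ) ^ (j+1) * (k.choose (j+1-1) : ℝ) * poch c (j+1) *
            poch (b + (j+1 : ℕ)) (k + 1 - (j+1))
        = (b - c) * ((-1 : ℝ) ^ j * (k.choose j : ℝ) * poch c j *
            poch ((b + 1) + j) (k - j)) := by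
      intro j hj
      have hjk : j ≤ k := Nat.lt_succ_iff.mp (Finset.mem_range.mp hj)
      have h1 : k + 1 - j = (k - j) + 1 := by omega
      have h2 : k + 1 - (j + 1) = k - j := by omega
      rw [h1, h2, poch_succ', poch_succ, Nat.add_sub_cancel]
      have h3 : (b + (j+1 : ℕ) : ℝ) = (b + j) + 1 := by push_cast; ring
      have h4 : ((b + 1) + j : ℝ) = (b + j) + 1 := by ring
      rw [h3, h4]
      ring
    rw [Finset.sum_congr rfl step, ← Finset.mul_sum, ih (b+1) c, poch_succ']
    ring_nf

lemma kummer_term_bound {a b : ℝ} (ha : 0 < a) (hab : a ≤ b) (z : ℝ) (k : ℕ) :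
    ‖poch a k / poch b k * z ^ k / (Nat.factorial k : ℝ)‖ ≤ |z| ^ k / (Nat.factorial k : ℝ) := by
  have hb : 0 < b := lt_of_lt_of_le ha hab
  have h1 : poch a k ≤ poch b k :=
    Finset.prod_le_prod (fun i _ => by positivity) (fun i _ => by linarith)
  have h2 : poch a k / poch b k ≤ 1 := (div_le_one (poch_pos hb k)).mpr h1
  have h3 : 0 ≤ poch a k / poch b k := le_of_lt (div_pos (poch_pos ha k) (poch_pos hb k))
  rw [Real.norm_eq_abs, abs_div, abs_mul, abs_div, abs_of_pos (poch_pos ha k),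
    abs_of_pos (poch_pos hb k), abs_pow, Nat.abs_cast]
  have h4 : poch a k / poch b k * |z| ^ k ≤ |z| ^ k :=
    mul_le_of_le_one_left (by positivity) h2
  gcongr

lemma kummer_summable_norm {a b : ℝ} (ha : 0 < a) (hab : a ≤ b) (z : ℝ) :
    Summable (fun k => ‖poch a k / poch b k * z ^ k / (Nat.factorial k : ℝ)‖) :=
  Summable.of_nonneg_of_le (fun k => norm_nonneg _) (kummer_term_bound ha hab z)
    (Real.summable_pow_div_factorial |z|)

lemma kummer_summable {a b : ℝ} (ha : 0 < a) (hab : a ≤ b) (z : ℝ) :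
    Summable (fun k => poch a k / poch b k * z ^ k / (Nat.factorial k : ℝ)) :=
  (kummer_summable_norm ha hab z).of_norm

lemma kummerM_pos_of_nonneg {a b z : ℝ} (ha : 0 < a) (hab : a ≤ b) (hz : 0 ≤ z) :
    0 < kummerM a b z := by
  have hb : 0 < b := lt_of_lt_of_le ha hab
  refine Summable.tsum_pos (kummer_summable ha hab z) (fun k => ?_) 0 ?_
  · have := poch_pos ha k
    have := poch_pos hb k
    positivity
  · simp [poch]

lemma kummer_transform {a b : ℝ} (ha : 0 < a) (hab : a < b) (z : ℝ) :
    kummerM a b z = kummerM (b - a) b (-z) * Real.exp z := by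
  have hb : 0 < b := ha.trans hab
  have hc : 0 < b - a := by linarith
  have hcb : b - a ≤ b := by linarith
  have hf : Summable fun k => ‖poch (b-a) k / poch b k * (-z) ^ k / (Nat.factorial k : ℝ)‖ :=
    kummer_summable_norm hc hcb (-z)
  have hg : Summable fun k => ‖z ^ k / (Nat.factorial k : ℝ)‖ := by
    have := Real.summable_pow_div_factorial |z|
    refine this.congr fun k => ?_
    rw [Real.norm_eq_abs, abs_div, abs_pow, Nat.abs_cast]
  have hexp : Real.exp z = ∑' k : ℕ, z ^ k / (Nat.factorial k : ℝ) := by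
    rw [Real.exp_eq_exp_ℝ, NormedSpace.exp_eq_tsum_div]
  rw [kummerM, hexp, kummerM, tsum_mul_tsum_eq_tsum_sum_range_of_summable_norm hf hg]
  refine tsum_congr fun n => ?_
  have inner : ∀ j ∈ Finset.range (n + 1),
      poch (b-a) j / poch b j * (-z) ^ j / (Nat.factorial j : ℝ) *
        (z ^ (n - j) / (Nat.factorial (n - j) : ℝ))
      = ((-1 : ℝ) ^ j * (n.choose j : ℝ) * poch (b-a) j * poch (b + j) (n - j)) *
        (z ^ n / ((Nat.factorial n : ℝ) * poch b n)) := by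
    intro j hj
    have hjn : j ≤ n := Nat.lt_succ_iff.mp (Finset.mem_range.mp hj)
    have hbn : poch b n = poch b j * poch (b + j) (n - j) := by
      rw [← poch_add]; congr 1; omega
    have hfact : (Nat.factorial n : ℝ) =
        (n.choose j : ℝ) * (Nat.factorial j : ℝ) * (Nat.factorial (n - j) : ℝ) := by
      exact_mod_cast (Nat.choose_mul_factorial_mul_factorial hjn).symm
    have hz : z ^ j * z ^ (n - j) = z ^ n := by
      rw [← pow_add]; congr 1; omega
    have hb1 : poch b j ≠ 0 := (poch_pos hb j).ne'
    have hb2 : poch (b + j) (n - j) ≠ 0 := (poch_pos (by positivity) (n - j)).ne'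
    have hch : (n.choose j : ℝ) ≠ 0 := by
      exact_mod_cast (Nat.choose_pos hjn).ne'
    have hfj : (Nat.factorial j : ℝ) ≠ 0 := by positivity
    have hfnj : (Nat.factorial (n - j) : ℝ) ≠ 0 := by positivity
    rw [hbn, hfact, ← hz, neg_pow]
    field_simp
  rw [Finset.sum_congr rfl inner, ← Finset.sum_mul, vandermonde n b (b - a)]
  have : b - (b - a) = a := by ring
  rw [this]
  have hb1 : poch b n ≠ 0 := (poch_pos hb n).ne'
  have hfn : (Nat.factorial n : ℝ) ≠ 0 := by positivity
  field_simp


/-- Positivity of the Kummer function. -/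
theorem kummerM_pos (a b z : ℝ) (ha : 0 < a) (hab : a < b) :
    0 < kummerM a b z := by
  rcases le_or_gt 0 z with hz | hz
  · exact kummerM_pos_of_nonneg ha hab.le hz
  · rw [kummer_transform ha hab z]
    have h1 : 0 < kummerM (b - a) b (-z) :=
      kummerM_pos_of_nonneg (by linarith) (by linarith) (by linarith)
    positivity
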